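/- arXiv:2501.19287 — 3 statements merged into one kernel-verified Lean document; each statement's English description precedes it below -/
import Mathlib

section
/- Triangle-like inequality for Rényi divergence: if D_α(P||Q) ≤ ε₁·α and D_α(Q||R) ≤ ε₂·α for some 1 < α < ∞ and ε₁, ε₂ ≥ 0, then D_α(P||R) ≤ (√ε₁ + √ε₂)²·α. -/
/-- Rényi divergence of order `α` of pmfs on a finite set. -/
noncomputable def renyiDiv {X : Type*} [Fintype X] (α : ℝ) (P Q : X → ℝ) : ℝ :=
  (α - 1)⁻¹ * Real.log (∑ x, P x ^ α * Q x ^ (1 - α))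

/-!
Write `M_α(P‖Q) = ∑ P^α Q^(1-α)`, so that `(α - 1) D_α = log M_α`. Splitting
`P^α R^(1-α) = (P^α Q^(1/p-α)) (Q^(α-1+1/q) R^(1-α))` and applying Hölder's inequality
with conjugate exponents `p, q` bounds `D_α(P‖R)` by a combination of `D_{pα}(P‖Q)` and
`D_{q(α-1)+1}(Q‖R)`. Under the hypotheses `D_β ≤ e₁² β` and `D_β ≤ e₂² β` the
choice `p = 1 + e₂(α-1)/(e₁α)` makes that combination exactly `(e₁ + e₂)² α`; letting
`e_i ↓ √ε_i` gives the claim.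
-/

open Real Finset Filter Topology

noncomputable def renyiMoment {X : Type*} [Fintype X] (α : ℝ) (P Q : X → ℝ) : ℝ :=
  ∑ x, P x ^ α * Q x ^ (1 - α)

section Renyi

variable {X : Type*} [Fintype X] {P Q R : X → ℝ}

lemma renyiMoment_pos [Nonempty X] (α : ℝ) (hP : ∀ x, 0 < P x) (hQ : ∀ x, 0 < Q x) :
    0 < renyiMoment α P Q :=
  sum_pos (fun x _ => mul_pos (rpow_pos_of_pos (hP x) _) (rpow_pos_of_pos (hQ x) _))
    univ_nonempty

lemma log_renyiMoment {α : ℝ} (hα : α ≠ 1) (P Q : X → ℝ) :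
    log (renyiMoment α P Q) = (α - 1) * renyiDiv α P Q :=
  (mul_inv_cancel_left₀ (sub_ne_zero.mpr hα) _).symm

lemma renyiMoment_le_holder {p q : ℝ} (hpq : p.HolderConjugate q) (α : ℝ)
    (hP : ∀ x, 0 ≤ P x) (hQ : ∀ x, 0 < Q x) (hR : ∀ x, 0 ≤ R x) :
    renyiMoment α P R ≤
      renyiMoment (p * α) P Q ^ (1 / p) * renyiMoment (q * (α - 1) + 1) Q R ^ (1 / q) := by
  have hp := hpq.ne_zero
  have hq := hpq.symm.ne_zero
  have hsplit : ∀ x, P x ^ α * R x ^ (1 - α) =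
      (P x ^ α * Q x ^ (1 / p - α)) * (Q x ^ (α - 1 + 1 / q) * R x ^ (1 - α)) := by
    intro x
    have hQ1 : Q x ^ (1 / p - α) * Q x ^ (α - 1 + 1 / q) = 1 := by
      have hexp : 1 / p - α + (α - 1 + 1 / q) = 0 := by linarith [hpq.one_div_add_one_div]
      rw [← rpow_add (hQ x), hexp, rpow_zero]
    linear_combination (P x ^ α * R x ^ (1 - α)) * hQ1.symm
  have hpow_p : ∀ x,
      (P x ^ α * Q x ^ (1 / p - α)) ^ p = P x ^ (p * α) * Q x ^ (1 - p * α) := by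
    intro x
    rw [mul_rpow (rpow_nonneg (hP x) _) (rpow_nonneg (hQ x).le _), ← rpow_mul (hP x),
      ← rpow_mul (hQ x).le]
    congr 2 <;> field_simp
  have hpow_q : ∀ x, (Q x ^ (α - 1 + 1 / q) * R x ^ (1 - α)) ^ q =
      Q x ^ (q * (α - 1) + 1) * R x ^ (1 - (q * (α - 1) + 1)) := by
    intro x
    rw [mul_rpow (rpow_nonneg (hQ x).le _) (rpow_nonneg (hR x) _), ← rpow_mul (hQ x).le,
      ← rpow_mul (hR x)]
    congr 2 <;> field_simp
    ring
  calc renyiMoment α P R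
      = ∑ x, (P x ^ α * Q x ^ (1 / p - α)) * (Q x ^ (α - 1 + 1 / q) * R x ^ (1 - α)) :=
        sum_congr rfl fun x _ => hsplit x
    _ ≤ (∑ x, (P x ^ α * Q x ^ (1 / p - α)) ^ p) ^ (1 / p) *
          (∑ x, (Q x ^ (α - 1 + 1 / q) * R x ^ (1 - α)) ^ q) ^ (1 / q) :=
        inner_le_Lp_mul_Lq_of_nonneg univ hpq
          (fun x _ => mul_nonneg (rpow_nonneg (hP x) _) (rpow_nonneg (hQ x).le _))
          (fun x _ => mul_nonneg (rpow_nonneg (hQ x).le _) (rpow_nonneg (hR x) _))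
    _ = _ := by simp only [hpow_p, hpow_q, renyiMoment]

lemma renyiDiv_le_holder {α p q : ℝ} (hα : 1 < α)
    (hpq : p.HolderConjugate q) (hP : ∀ x, 0 < P x) (hQ : ∀ x, 0 < Q x) (hR : ∀ x, 0 < R x) :
    renyiDiv α P R ≤
      (p * α - 1) / (p * (α - 1)) * renyiDiv (p * α) P Q + renyiDiv (q * (α - 1) + 1) Q R := by
  rcases isEmpty_or_nonempty X with hX | hX
  · simp [renyiDiv]
  have hα1 : 0 < α - 1 := sub_pos.mpr hα
  have hp := hpq.pos
  have hq := hpq.symm.pos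
  have hpα : p * α ≠ 1 := (one_lt_mul_of_lt_of_le hpq.lt hα.le).ne'
  have hqα : q * (α - 1) + 1 ≠ 1 := by simp [hq.ne', hα1.ne']
  refine le_of_mul_le_mul_left ?_ hα1
  calc (α - 1) * renyiDiv α P R
      = log (renyiMoment α P R) := (log_renyiMoment hα.ne' P R).symm
    _ ≤ log (renyiMoment (p * α) P Q ^ (1 / p) * renyiMoment (q * (α - 1) + 1) Q R ^ (1 / q)) :=
        log_le_log (renyiMoment_pos α hP hR)
          (renyiMoment_le_holder hpq α (fun x => (hP x).le) hQ (fun x => (hR x).le))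
    _ = 1 / p * log (renyiMoment (p * α) P Q) +
          1 / q * log (renyiMoment (q * (α - 1) + 1) Q R) := by
        rw [log_mul (rpow_pos_of_pos (renyiMoment_pos _ hP hQ) _).ne'
            (rpow_pos_of_pos (renyiMoment_pos _ hQ hR) _).ne',
          log_rpow (renyiMoment_pos _ hP hQ), log_rpow (renyiMoment_pos _ hQ hR)]
    _ = (α - 1) * ((p * α - 1) / (p * (α - 1)) * renyiDiv (p * α) P Q +
          renyiDiv (q * (α - 1) + 1) Q R) := by
        rw [log_renyiMoment hpα, log_renyiMoment hqα]
        field_simp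
        ring

lemma renyiDiv_le_sq_add_mul {α e₁ e₂ : ℝ}
    (hα : 1 < α) (he₁ : 0 < e₁) (he₂ : 0 < e₂)
    (hP : ∀ x, 0 < P x) (hQ : ∀ x, 0 < Q x) (hR : ∀ x, 0 < R x)
    (hPQ : ∀ β : ℝ, 1 < β → renyiDiv β P Q ≤ e₁ ^ 2 * β)
    (hQR : ∀ β : ℝ, 1 < β → renyiDiv β Q R ≤ e₂ ^ 2 * β) :
    renyiDiv α P R ≤ (e₁ + e₂) ^ 2 * α := by
  have hα1 : 0 < α - 1 := sub_pos.mpr hα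
  set p := 1 + e₂ * (α - 1) / (e₁ * α)
  set q := 1 + e₁ * α / (e₂ * (α - 1))
  have hpq : p.HolderConjugate q := by
    refine holderConjugate_iff.mpr ⟨lt_add_of_pos_right 1 (by positivity), ?_⟩
    simp only [p, q]
    field_simp
    ring
  have hpα : 1 < p * α := one_lt_mul_of_lt_of_le hpq.lt hα.le
  have hqα : 1 < q * (α - 1) + 1 := by simp [hpq.symm.pos, hα1]
  have hcoef : 0 ≤ (p * α - 1) / (p * (α - 1)) := by
    have := hpq.pos
    apply div_nonneg <;> nlinarith
  calc renyiDiv α P R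
      ≤ (p * α - 1) / (p * (α - 1)) * renyiDiv (p * α) P Q + renyiDiv (q * (α - 1) + 1) Q R :=
        renyiDiv_le_holder hα hpq hP hQ hR
    _ ≤ (p * α - 1) / (p * (α - 1)) * (e₁ ^ 2 * (p * α)) +
          e₂ ^ 2 * (q * (α - 1) + 1) := by
        gcongr
        · exact hPQ _ hpα
        · exact hQR _ hqα
    _ = (e₁ + e₂) ^ 2 * α := by
        simp only [p, q]
        field_simp
        ring

end Renyi

theorem renyi_triangle_like_general {X : Type*} [Fintype X] (α ε₁ ε₂ : ℝ)
    (hα : 1 < α)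
    (P Q R : X → ℝ)
    (hP0 : ∀ x, 0 < P x)
    (hQ0 : ∀ x, 0 < Q x)
    (hR0 : ∀ x, 0 < R x)
    (hPQ : ∀ α' : ℝ, 1 < α' → renyiDiv α' P Q ≤ ε₁ * α')
    (hQR : ∀ α' : ℝ, 1 < α' → renyiDiv α' Q R ≤ ε₂ * α') :
    renyiDiv α P R ≤ (Real.sqrt ε₁ + Real.sqrt ε₂) ^ 2 * α := by
  have hbound : ∀ t > 0, renyiDiv α P R ≤ ((√ε₁ + t) + (√ε₂ + t)) ^ 2 * α := by
    intro t ht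
    have hsq : ∀ ε : ℝ, ε ≤ (√ε + t) ^ 2 := fun ε =>
      ((sqrt_lt' (by positivity)).mp (lt_add_of_pos_right _ ht)).le
    refine renyiDiv_le_sq_add_mul hα (by positivity) (by positivity) hP0 hQ0 hR0
      (fun β hβ => (hPQ β hβ).trans ?_) (fun β hβ => (hQR β hβ).trans ?_) <;>
    exact mul_le_mul_of_nonneg_right (hsq _) (by linarith)
  have hlim : Tendsto (fun t => ((√ε₁ + t) + (√ε₂ + t)) ^ 2 * α) (𝓝[>] 0)
      (𝓝 ((√ε₁ + √ε₂) ^ 2 * α)) := by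
    apply tendsto_nhdsWithin_of_tendsto_nhds
    have hcont : Continuous fun t : ℝ => ((√ε₁ + t) + (√ε₂ + t)) ^ 2 * α := by fun_prop
    convert hcont.tendsto 0 using 2
    simp
  exact ge_of_tendsto hlim (eventually_nhdsWithin_of_forall hbound)

/-- Triangle-like inequality for Rényi divergence (Steinke, Lemma 33.7):
if `D_{α'}(P‖Q) ≤ ε₁·α'` and `D_{α'}(Q‖R) ≤ ε₂·α'` for all orders `α' ∈ (1,∞)`,
then `D_α(P‖R) ≤ (√ε₁ + √ε₂)²·α` for any `1 < α < ∞`. -/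
theorem renyi_triangle_like {X : Type*} [Fintype X] (α ε₁ ε₂ : ℝ)
    (hα : 1 < α) (hε₁ : 0 ≤ ε₁) (hε₂ : 0 ≤ ε₂)
    (P Q R : X → ℝ)
    (hP0 : ∀ x, 0 < P x) (hP1 : ∑ x, P x = 1)
    (hQ0 : ∀ x, 0 < Q x) (hQ1 : ∑ x, Q x = 1)
    (hR0 : ∀ x, 0 < R x) (hR1 : ∑ x, R x = 1)
    (hPQ : ∀ α' : ℝ, 1 < α' → renyiDiv α' P Q ≤ ε₁ * α')
    (hQR : ∀ α' : ℝ, 1 < α' → renyiDiv α' Q R ≤ ε₂ * α') :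
    renyiDiv α P R ≤ (Real.sqrt ε₁ + Real.sqrt ε₂) ^ 2 * α :=
  renyi_triangle_like_general α ε₁ ε₂ hα P Q R hP0 hQ0 hR0 hPQ hQR
end

section
/- If two probability distributions P and Q on a finite set satisfy D_α(P||Q) ≤ ε for some α > 1, then for any event E, P(E) ≤ (e^ε · Q(E))^{(α−1)/α}. -/
/-- If pmfs `P`, `Q` on a finite set satisfy `D_α(P‖Q) ≤ ε` for
some `α > 1`, then for any event `E`, `P(E) ≤ (e^ε · Q(E))^{(α−1)/α}`. -/
theorem prob_bound_of_renyi_div {X : Type*} [Fintype X] (α ε : ℝ) (hα : 1 < α)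
    (P Q : X → ℝ)
    (hP0 : ∀ x, 0 ≤ P x) (hP1 : ∑ x, P x = 1)
    (hQ0 : ∀ x, 0 < Q x) (hQ1 : ∑ x, Q x = 1)
    (hdiv : renyiDiv α P Q ≤ ε) :
    ∀ E : Finset X,
      ∑ x ∈ E, P x ≤ (Real.exp ε * ∑ x ∈ E, Q x) ^ ((α - 1) / α) := by
  intro E
  have hα0 : (0:ℝ) < α := lt_trans one_pos hα
  have hα1 : (0:ℝ) < α - 1 := sub_pos.mpr hα
  set S : ℝ := ∑ x, P x ^ α * Q x ^ (1 - α) with hS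
  have hterm : ∀ x, 0 ≤ P x ^ α * Q x ^ (1 - α) := fun x =>
    mul_nonneg (Real.rpow_nonneg (hP0 x) α) (Real.rpow_nonneg (hQ0 x).le _)
  have hS0 : 0 ≤ S := Finset.sum_nonneg fun x _ => hterm x
  -- S ≤ exp ((α-1) ε)
  have hSle : S ≤ Real.exp ((α - 1) * ε) := by
    rcases eq_or_lt_of_le hS0 with h | h
    · exact le_of_lt (h ▸ Real.exp_pos _)
    · have hlog : Real.log S ≤ (α - 1) * ε := by
        have := hdiv
        unfold renyiDiv at this
        rw [inv_mul_le_iff₀ hα1] at this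
        linarith [this]
      calc S = Real.exp (Real.log S) := (Real.exp_log h).symm
        _ ≤ Real.exp ((α - 1) * ε) := Real.exp_le_exp.mpr hlog
  -- Hölder
  have hpq : Real.HolderConjugate α (α / (α - 1)) :=
    Real.HolderConjugate.conjExponent hα
  set f : X → ℝ := fun x => P x * Q x ^ ((1 - α) / α) with hf
  set g : X → ℝ := fun x => Q x ^ ((α - 1) / α) with hg
  have hfg : ∀ x, f x * g x = P x := by
    intro x
    have : Q x ^ ((1 - α) / α) * Q x ^ ((α - 1) / α) = 1 := by
      rw [← Real.rpow_add (hQ0 x), show (1 - α) / α + (α - 1) / α = 0 by ring,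
        Real.rpow_zero]
    calc f x * g x = P x * (Q x ^ ((1 - α) / α) * Q x ^ ((α - 1) / α)) := by ring
      _ = P x := by rw [this, mul_one]
  have hfa : ∀ x, |f x| ^ α = P x ^ α * Q x ^ (1 - α) := by
    intro x
    rw [abs_of_nonneg (mul_nonneg (hP0 x) (Real.rpow_nonneg (hQ0 x).le _)),
      Real.mul_rpow (hP0 x) (Real.rpow_nonneg (hQ0 x).le _),
      ← Real.rpow_mul (hQ0 x).le,
      show (1 - α) / α * α = 1 - α by field_simp]
  have hgq : ∀ x, |g x| ^ (α / (α - 1)) = Q x := by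
    intro x
    rw [abs_of_nonneg (Real.rpow_nonneg (hQ0 x).le _),
      ← Real.rpow_mul (hQ0 x).le,
      show (α - 1) / α * (α / (α - 1)) = 1 by field_simp, Real.rpow_one]
  have hhold := Real.inner_le_Lp_mul_Lq E f g hpq
  simp only [hfg] at hhold
  have hsum1 : ∑ x ∈ E, |f x| ^ α ≤ S := by
    rw [hS]
    calc ∑ x ∈ E, |f x| ^ α = ∑ x ∈ E, P x ^ α * Q x ^ (1 - α) :=
          Finset.sum_congr rfl fun x _ => hfa x
      _ ≤ ∑ x, P x ^ α * Q x ^ (1 - α) :=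
          Finset.sum_le_sum_of_subset_of_nonneg (Finset.subset_univ E)
            (fun x _ _ => hterm x)
  have hsum2 : ∑ x ∈ E, |g x| ^ (α / (α - 1)) = ∑ x ∈ E, Q x :=
    Finset.sum_congr rfl fun x _ => hgq x
  rw [hsum2] at hhold
  set QE : ℝ := ∑ x ∈ E, Q x with hQE
  have hQE0 : 0 ≤ QE := Finset.sum_nonneg fun x _ => (hQ0 x).le
  have h1 : (∑ x ∈ E, |f x| ^ α) ^ (1 / α) ≤ Real.exp ((α - 1) * ε) ^ (1 / α) :=
    Real.rpow_le_rpow (Finset.sum_nonneg fun x _ => by positivity)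
      (le_trans hsum1 hSle) (by positivity)
  have h2 : Real.exp ((α - 1) * ε) ^ (1 / α) = Real.exp ε ^ ((α - 1) / α) := by
    rw [← Real.exp_mul, ← Real.exp_mul]
    congr 1
    ring
  have h3 : (1 : ℝ) / (α / (α - 1)) = (α - 1) / α := by
    field_simp
  calc ∑ x ∈ E, P x
      ≤ (∑ x ∈ E, |f x| ^ α) ^ (1 / α) * QE ^ (1 / (α / (α - 1))) := hhold
    _ ≤ Real.exp ε ^ ((α - 1) / α) * QE ^ ((α - 1) / α) := by
        rw [h3]
        exact mul_le_mul_of_nonneg_right (h2 ▸ h1) (Real.rpow_nonneg hQE0 _)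
    _ = (Real.exp ε * QE) ^ ((α - 1) / α) :=
        (Real.mul_rpow (Real.exp_pos ε).le hQE0).symm
end

section
/- Privacy amplification by subsampling (simplified ε-DP version): if mechanism A is ε-DP, then the mechanism that first subsamples each record independently (or samples a random subset of size m from n, with q = m/n) and then applies A is ε'-DP with ε' = log(1 + q(e^ε − 1)); in particular ε' ≤ q·ε·e^ε, and for small ε, ε' ≈ q·ε. -/
/-!
Write the neighbouring datasets as `S = insert a s` and `S' = insert b s`, and split the
`m`-subsets of each according to whether they contain the differing record. Both sides share the
mass `C` of the `m`-subsets of `s`; let `Vₐ`, `V_b` be the masses of the subsets `insert a U`,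
`insert b U`. Pairing `insert a U` with `insert b U` gives `Vₐ ≤ e^ε V_b`, and replacing `a` by
each `c ∈ s \ U` and double counting gives `(n - m) Vₐ ≤ e^ε m C`. These two bounds combine to
`C + Vₐ ≤ (1 + q (e^ε - 1)) (C + V_b)` with `q = m / n`.
-/

noncomputable def subsampled {ι X : Type*} [DecidableEq ι]
    (A : Finset ι → X → ℝ) (m : ℕ) (S : Finset ι) (x : X) : ℝ :=
  (∑ T ∈ S.powersetCard m, A T x) / (S.card.choose m : ℝ)

open Finset

namespace Finset

variable {ι : Type*} [DecidableEq ι]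

lemma card_insert_sdiff_insert_le_one (a b : ι) {s : Finset ι} (ha : a ∉ s) :
    #(insert a s \ insert b s) ≤ 1 := by
  rcases eq_or_ne a b with rfl | hab
  · simp
  · simp [insert_sdiff_insert' hab ha]

lemma eq_insert_inter_of_sdiff_eq_singleton {S S' : Finset ι} {a : ι} (ha : S \ S' = {a}) :
    S = insert a (S ∩ S') := by
  rw [insert_eq, ← ha, sdiff_union_inter]

lemma sum_powersetCard_succ_insert {M : Type*} [AddCommMonoid M] {a : ι} {s : Finset ι}
    (ha : a ∉ s) (k : ℕ) (f : Finset ι → M) :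
    ∑ T ∈ (insert a s).powersetCard (k + 1), f T =
      ∑ T ∈ s.powersetCard (k + 1), f T + ∑ U ∈ s.powersetCard k, f (insert a U) := by
  have hdisj : Disjoint (s.powersetCard (k + 1)) ((s.powersetCard k).image (insert a)) := by
    refine disjoint_left.mpr fun T hT hT' => ?_
    obtain ⟨U, -, rfl⟩ := mem_image.mp hT'
    exact ha ((mem_powersetCard.mp hT).1 (mem_insert_self a U))
  have hinj : Set.InjOn (insert a) (s.powersetCard k : Set (Finset ι)) := by
    intro U hU V hV hUV
    have hnot : ∀ W ∈ (s.powersetCard k : Set (Finset ι)), a ∉ W :=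
      fun W hW haW => ha ((mem_powersetCard.mp hW).1 haW)
    rw [← erase_insert (hnot U hU), hUV, erase_insert (hnot V hV)]
  rw [powersetCard_succ_insert ha, sum_union hdisj, sum_image hinj]

/-- Each `(k+1)`-subset `T` of `s` arises as `insert c U` from exactly `k+1` pairs `(U, c)`. -/
lemma sum_powersetCard_sum_sdiff_insert {M : Type*} [AddCommMonoid M] (s : Finset ι) (k : ℕ)
    (g : Finset ι → M) :
    ∑ U ∈ s.powersetCard k, ∑ c ∈ s \ U, g (insert c U) =
      ∑ T ∈ s.powersetCard (k + 1), (k + 1) • g T := by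
  have hcard : ∀ T ∈ s.powersetCard (k + 1), (k + 1) • g T = ∑ _c ∈ T, g T := by
    intro T hT
    rw [sum_const, (mem_powersetCard.mp hT).2]
  rw [sum_congr rfl hcard, sum_sigma', sum_sigma']
  refine sum_nbij' (fun p => ⟨insert p.2 p.1, p.2⟩) (fun p => ⟨p.1.erase p.2, p.2⟩)
    ?_ ?_ ?_ ?_ fun _ _ => rfl
  · rintro ⟨U, c⟩ hp
    simp only [mem_sigma, mem_powersetCard, mem_sdiff] at hp ⊢
    obtain ⟨⟨hUs, hUk⟩, hcs, hcU⟩ := hp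
    exact ⟨⟨insert_subset hcs hUs, by rw [card_insert_of_notMem hcU, hUk]⟩, mem_insert_self c U⟩
  · rintro ⟨T, c⟩ hp
    simp only [mem_sigma, mem_powersetCard, mem_sdiff] at hp ⊢
    obtain ⟨⟨hTs, hTk⟩, hcT⟩ := hp
    exact ⟨⟨(erase_subset c T).trans hTs, by rw [card_erase_of_mem hcT, hTk]; rfl⟩,
      hTs hcT, notMem_erase c T⟩
  · rintro ⟨U, c⟩ hp
    simp only [mem_sigma, mem_sdiff] at hp
    simp [erase_insert hp.2.2]
  · rintro ⟨T, c⟩ hp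
    simp only [mem_sigma] at hp
    simp [insert_erase hp.2]

end Finset

lemma add_le_one_add_div_mul_sub_one_mul_add {C Va Vb t N M : ℝ}
    (ht : 1 ≤ t) (hN : 0 < N) (hM : 0 ≤ M) (h₁ : Va ≤ t * Vb) (h₂ : (N - M) * Va ≤ t * (M * C)) :
    C + Va ≤ (1 + M / N * (t - 1)) * (C + Vb) := by
  set q := M / N
  have hq : 0 ≤ q := by positivity
  have h₂' : (1 - q) * Va ≤ t * q * C :=
    calc (1 - q) * Va = (N - M) * Va / N := by simp only [q]; field_simp
      _ ≤ t * (M * C) / N := div_le_div_of_nonneg_right h₂ hN.le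
      _ = t * q * C := by simp only [q]; ring
  rw [← mul_le_mul_iff_right₀ (by linarith : 0 < t)]
  nlinarith [mul_le_mul_of_nonneg_left h₁ (by nlinarith : 0 ≤ 1 + q * (t - 1)),
    mul_le_mul_of_nonneg_left h₂' (by linarith : 0 ≤ t - 1)]

lemma Real.log_one_add_mul_exp_sub_one_le {q ε : ℝ} (hq : 0 ≤ q) (hε : 0 ≤ ε) :
    Real.log (1 + q * (Real.exp ε - 1)) ≤ q * ε * Real.exp ε := by
  have hexp : Real.exp ε - 1 ≤ ε * Real.exp ε := by
    have h := mul_le_mul_of_nonneg_right (Real.one_sub_le_exp_neg ε) (Real.exp_pos ε).le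
    rw [← Real.exp_add, neg_add_cancel, Real.exp_zero] at h
    linarith
  have hpos : 0 < 1 + q * (Real.exp ε - 1) :=
    add_pos_of_pos_of_nonneg one_pos (mul_nonneg hq (by linarith [Real.one_le_exp hε]))
  calc Real.log (1 + q * (Real.exp ε - 1)) ≤ q * (Real.exp ε - 1) := by
        linarith [Real.log_le_sub_one_of_pos hpos]
    _ ≤ q * ε * Real.exp ε := by nlinarith

section ReplaceOne

variable {ι : Type*} [DecidableEq ι] {f : Finset ι → ℝ} {t : ℝ} {k : ℕ}

lemma le_mul_of_replace_insert
    (hf : ∀ T T' : Finset ι, #T = k + 1 → #T' = k + 1 → #(T \ T') ≤ 1 → f T ≤ t * f T')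
    {U : Finset ι} {a c : ι} (hU : #U = k) (ha : a ∉ U) (hc : c ∉ U) :
    f (insert a U) ≤ t * f (insert c U) :=
  hf _ _ (by rw [card_insert_of_notMem ha, hU]) (by rw [card_insert_of_notMem hc, hU])
    (card_insert_sdiff_insert_le_one a c ha)

lemma sum_insert_le_mul_sum_insert
    (hf : ∀ T T' : Finset ι, #T = k + 1 → #T' = k + 1 → #(T \ T') ≤ 1 → f T ≤ t * f T')
    {s : Finset ι} {a b : ι} (ha : a ∉ s) (hb : b ∉ s) :
    ∑ U ∈ s.powersetCard k, f (insert a U) ≤ t * ∑ U ∈ s.powersetCard k, f (insert b U) := by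
  rw [mul_sum]
  refine sum_le_sum fun U hU => ?_
  obtain ⟨hUs, hUk⟩ := mem_powersetCard.mp hU
  exact le_mul_of_replace_insert hf hUk (fun h => ha (hUs h)) (fun h => hb (hUs h))

lemma card_sub_mul_sum_insert_le
    (hf : ∀ T T' : Finset ι, #T = k + 1 → #T' = k + 1 → #(T \ T') ≤ 1 → f T ≤ t * f T')
    {s : Finset ι} {a : ι} (ha : a ∉ s) :
    ((#s : ℝ) - k) * ∑ U ∈ s.powersetCard k, f (insert a U) ≤
      t * ((k + 1) * ∑ T ∈ s.powersetCard (k + 1), f T) := by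
  calc ((#s : ℝ) - k) * ∑ U ∈ s.powersetCard k, f (insert a U)
      = ∑ U ∈ s.powersetCard k, ∑ _c ∈ s \ U, f (insert a U) := by
        rw [mul_sum]
        refine sum_congr rfl fun U hU => ?_
        obtain ⟨hUs, hUk⟩ := mem_powersetCard.mp hU
        rw [sum_const, nsmul_eq_mul, card_sdiff_of_subset hUs, Nat.cast_sub (card_le_card hUs),
          hUk]
    _ ≤ ∑ U ∈ s.powersetCard k, ∑ c ∈ s \ U, t * f (insert c U) := by
        refine sum_le_sum fun U hU => sum_le_sum fun c hc => ?_
        obtain ⟨hUs, hUk⟩ := mem_powersetCard.mp hU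
        exact le_mul_of_replace_insert hf hUk (fun h => ha (hUs h)) (mem_sdiff.mp hc).2
    _ = t * ((k + 1) * ∑ T ∈ s.powersetCard (k + 1), f T) := by
        rw [sum_powersetCard_sum_sdiff_insert s k (fun T => t * f T), mul_sum, mul_sum]
        simp only [nsmul_eq_mul, Nat.cast_add, Nat.cast_one]
        exact sum_congr rfl fun T _ => by ring

lemma sum_powersetCard_insert_le
    (hf : ∀ T T' : Finset ι, #T = k + 1 → #T' = k + 1 → #(T \ T') ≤ 1 → f T ≤ t * f T')
    (ht : 1 ≤ t) {s : Finset ι} {a b : ι} (ha : a ∉ s) (hb : b ∉ s) :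
    ∑ T ∈ (insert a s).powersetCard (k + 1), f T ≤
      (1 + (k + 1) / (#s + 1) * (t - 1)) * ∑ T ∈ (insert b s).powersetCard (k + 1), f T := by
  rw [sum_powersetCard_succ_insert ha, sum_powersetCard_succ_insert hb]
  refine add_le_one_add_div_mul_sub_one_mul_add ht (by positivity) (by positivity)
    (sum_insert_le_mul_sum_insert hf ha hb) ?_
  convert card_sub_mul_sum_insert_le hf ha using 2
  ring

lemma sum_powersetCard_le_of_card_sdiff_le_one {m : ℕ} (hf0 : ∀ T, 0 ≤ f T) (ht : 1 ≤ t)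
    (hf : ∀ T T' : Finset ι, #T = m → #T' = m → #(T \ T') ≤ 1 → f T ≤ t * f T')
    {S S' : Finset ι} (hcard : #S = #S') (hSS' : #(S \ S') ≤ 1) :
    ∑ T ∈ S.powersetCard m, f T ≤ (1 + m / #S * (t - 1)) * ∑ T ∈ S'.powersetCard m, f T := by
  have hfactor : ∀ x : ℝ, 0 ≤ x → x ≤ (1 + m / #S * (t - 1)) * x := fun x hx =>
    le_mul_of_one_le_left hx (le_add_of_nonneg_right (mul_nonneg (by positivity) (by linarith)))
  rcases m with _ | k
  · simpa only [powersetCard_zero, sum_singleton] using hfactor _ (hf0 ∅)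
  rcases Nat.le_one_iff_eq_zero_or_eq_one.mp hSS' with h0 | h1
  · obtain rfl : S = S' :=
      eq_of_subset_of_card_le (sdiff_eq_empty_iff_subset.mp (card_eq_zero.mp h0)) hcard.ge
    exact hfactor _ (sum_nonneg fun T _ => hf0 T)
  obtain ⟨a, ha⟩ := card_eq_one.mp h1
  obtain ⟨b, hb⟩ := card_eq_one.mp ((card_sdiff_comm hcard.symm).trans h1)
  have haS' : a ∉ S' := (mem_sdiff.mp (ha ▸ mem_singleton_self a)).2
  have hbS : b ∉ S := (mem_sdiff.mp (hb ▸ mem_singleton_self b)).2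
  have hS := eq_insert_inter_of_sdiff_eq_singleton ha
  have hS' := eq_insert_inter_of_sdiff_eq_singleton hb
  rw [inter_comm] at hS'
  set s := S ∩ S'
  have has : a ∉ s := fun h => haS' (mem_inter.mp h).2
  have hbs : b ∉ s := fun h => hbS (mem_inter.mp h).1
  rw [hS, hS', card_insert_of_notMem has]
  exact_mod_cast sum_powersetCard_insert_le hf ht has hbs

end ReplaceOne

lemma sum_subsampled {ι X : Type*} [DecidableEq ι] (A : Finset ι → X → ℝ) (m : ℕ)
    (S : Finset ι) (E : Finset X) :
    ∑ x ∈ E, subsampled A m S x = (∑ T ∈ S.powersetCard m, ∑ x ∈ E, A T x) / (#S).choose m := by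
  simp only [subsampled, ← sum_div, sum_comm (s := E)]

theorem privacy_amplification_by_subsampling_general {ι X : Type*} [DecidableEq ι]
    (A : Finset ι → X → ℝ) (ε : ℝ) (hε : 0 ≤ ε)
    (m n : ℕ) (hA0 : ∀ T x, 0 ≤ A T x)
    (hDP : ∀ T T' : Finset ι, T.card = m → T'.card = m → (T \ T').card ≤ 1 →
      ∀ E : Finset X, ∑ x ∈ E, A T x ≤ Real.exp ε * ∑ x ∈ E, A T' x) :
    (∀ S S' : Finset ι, S.card = n → S'.card = n → (S \ S').card ≤ 1 →
      ∀ E : Finset X,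
        ∑ x ∈ E, subsampled A m S x ≤
          Real.exp (Real.log (1 + (m / n : ℝ) * (Real.exp ε - 1)))
            * ∑ x ∈ E, subsampled A m S' x) ∧
    Real.log (1 + (m / n : ℝ) * (Real.exp ε - 1)) ≤
      (m / n : ℝ) * ε * Real.exp ε := by
  have ht : 1 ≤ Real.exp ε := Real.one_le_exp hε
  refine ⟨fun S S' hS hS' hSS' E => ?_, Real.log_one_add_mul_exp_sub_one_le (by positivity) hε⟩
  have hpos : 0 < 1 + (m / n : ℝ) * (Real.exp ε - 1) :=
    add_pos_of_pos_of_nonneg one_pos (mul_nonneg (by positivity) (by linarith))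
  have hsum := sum_powersetCard_le_of_card_sdiff_le_one (f := fun T => ∑ x ∈ E, A T x)
    (fun T => sum_nonneg fun x _ => hA0 T x) ht (fun T T' hT hT' h => hDP T T' hT hT' h E)
    (hS.trans hS'.symm) hSS'
  rw [hS] at hsum
  rw [Real.exp_log hpos, sum_subsampled, sum_subsampled, hS, hS', ← mul_div_assoc]
  exact div_le_div_of_nonneg_right hsum (Nat.cast_nonneg _)

/-- Privacy amplification by subsampling (simplified ε-DP
version): if the base mechanism `A` is `ε`-DP (w.r.t. replacing one record),
then the mechanism that samples a random subset of size `m` from the `n`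
records and applies `A` is `ε'`-DP with `ε' = log(1 + q(e^ε − 1))` where
`q = m/n`; in particular `ε' ≤ q·ε·e^ε`. -/
theorem privacy_amplification_by_subsampling {ι X : Type*} [DecidableEq ι]
    [Fintype X] (A : Finset ι → X → ℝ) (ε : ℝ) (hε : 0 ≤ ε)
    (m n : ℕ) (hn : 0 < n) (hmn : m ≤ n)
    (hA0 : ∀ T x, 0 ≤ A T x) (hA1 : ∀ T, ∑ x, A T x = 1)
    (hDP : ∀ T T' : Finset ι, T.card = m → T'.card = m → (T \ T').card ≤ 1 →
      ∀ E : Finset X, ∑ x ∈ E, A T x ≤ Real.exp ε * ∑ x ∈ E, A T' x) :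
    (∀ S S' : Finset ι, S.card = n → S'.card = n → (S \ S').card ≤ 1 →
      ∀ E : Finset X,
        ∑ x ∈ E, subsampled A m S x ≤
          Real.exp (Real.log (1 + (m / n : ℝ) * (Real.exp ε - 1)))
            * ∑ x ∈ E, subsampled A m S' x) ∧
    Real.log (1 + (m / n : ℝ) * (Real.exp ε - 1)) ≤
      (m / n : ℝ) * ε * Real.exp ε :=
  privacy_amplification_by_subsampling_general A ε hε m n hA0 hDP
end
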